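/- arXiv:2004.09313 — 2 statements merged into one kernel-verified Lean document; each statement's English description precedes it below -/
import Mathlib

section
/- For every natural number n, 1 + 2⁻ⁿ < ∏_{k=n+1}^∞ (1 + 2⁻ᵏ); equivalently, ln(1 + 2⁻ⁿ) < ∑_{k=n+1}^∞ ln(1 + 2⁻ᵏ). -/
/-!
With `x = 2⁻ⁿ` the terms `2^-(n+1+k)` sum to `x`. Splitting off the first factor `1 + x/2`,
the remaining terms still sum to `x/2`, and `∏ (1 + aₖ) ≥ 1 + ∑ aₖ` for `aₖ ≥ 0`, so the
product is at least `(1 + x/2)² > 1 + x`. Taking logarithms gives the second form.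
-/

theorem Finset.one_add_sum_le_prod_one_add {ι : Type*} (s : Finset ι) {f : ι → ℝ}
    (hf : ∀ i, 0 ≤ f i) : 1 + ∑ i ∈ s, f i ≤ ∏ i ∈ s, (1 + f i) := by
  classical
  induction s using Finset.induction_on with
  | empty => simp
  | insert a s ha ih =>
    rw [Finset.sum_insert ha, Finset.prod_insert ha]
    have hs : 0 ≤ ∑ i ∈ s, f i := Finset.sum_nonneg fun i _ ↦ hf i
    nlinarith [hf a]

theorem Real.one_add_tsum_le_tprod_one_add {ι : Type*} {f : ι → ℝ} (hf : Summable f)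
    (hf_nonneg : ∀ i, 0 ≤ f i) : 1 + ∑' i, f i ≤ ∏' i, (1 + f i) :=
  le_of_tendsto_of_tendsto' (hf.hasSum.const_add 1)
    (Real.multipliable_one_add_of_summable hf).hasProd
    fun s ↦ s.one_add_sum_le_prod_one_add hf_nonneg

theorem Real.one_add_tsum_lt_tprod_one_add {f : ℕ → ℝ} (hf : Summable f)
    (hf_nonneg : ∀ k, 0 ≤ f k) (h0 : 0 < f 0) (h1 : 0 < f 1) :
    1 + ∑' k, f k < ∏' k, (1 + f k) := by
  have htail : Summable fun k ↦ f (k + 1) := (summable_nat_add_iff 1).mpr hf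
  have htail_pos : 0 < ∑' k, f (k + 1) := htail.tsum_pos (fun k ↦ hf_nonneg _) 0 h1
  rw [hf.tsum_eq_zero_add, tprod_eq_zero_mul' (f := fun k ↦ 1 + f k)
    (Real.multipliable_one_add_of_summable htail)]
  calc 1 + (f 0 + ∑' k, f (k + 1)) < (1 + f 0) * (1 + ∑' k, f (k + 1)) := by
        nlinarith [mul_pos h0 htail_pos]
    _ ≤ (1 + f 0) * ∏' k, (1 + f (k + 1)) :=
      mul_le_mul_of_nonneg_left
        (Real.one_add_tsum_le_tprod_one_add htail fun k ↦ hf_nonneg _) (by linarith)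

theorem Real.log_tprod_one_add {ι : Type*} {f : ι → ℝ} (hf : Summable f)
    (hf_gt : ∀ i, -1 < f i) : Real.log (∏' i, (1 + f i)) = ∑' i, Real.log (1 + f i) := by
  rw [← Real.rexp_tsum_eq_tprod (fun i ↦ by linarith [hf_gt i])
    (Real.summable_log_one_add_of_summable hf), Real.log_exp]

theorem hasSum_two_zpow_neg_nat_add (n : ℕ) :
    HasSum (fun k : ℕ ↦ (2 : ℝ) ^ (-((n + 1 + k : ℕ) : ℤ))) ((2 : ℝ) ^ (-(n : ℤ))) := by
  convert hasSum_geometric_two' ((2 : ℝ) ^ (-(n : ℤ))) using 2 with k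
  simp only [zpow_neg, zpow_natCast, pow_add]
  field_simp

/-- For every natural `n`, `1 + 2⁻ⁿ < ∏_{k=n+1}^∞ (1 + 2⁻ᵏ)`; equivalently,
`ln (1 + 2⁻ⁿ) < ∑_{k=n+1}^∞ ln (1 + 2⁻ᵏ)`. -/
theorem digit_set_complete (n : ℕ) :
    (1 + (2 : ℝ) ^ (-(n : ℤ)) < ∏' k : ℕ, (1 + (2 : ℝ) ^ (-((n + 1 + k : ℕ) : ℤ)))) ∧
    (Real.log (1 + (2 : ℝ) ^ (-(n : ℤ))) <
      ∑' k : ℕ, Real.log (1 + (2 : ℝ) ^ (-((n + 1 + k : ℕ) : ℤ)))) := by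
  have hsum := hasSum_two_zpow_neg_nat_add n
  have hpos : ∀ m : ℤ, (0 : ℝ) < 2 ^ m := fun m ↦ zpow_pos two_pos m
  have hprod := Real.one_add_tsum_lt_tprod_one_add hsum.summable (fun k ↦ (hpos _).le)
    (hpos _) (hpos _)
  rw [hsum.tsum_eq] at hprod
  refine ⟨hprod, ?_⟩
  rw [← Real.log_tprod_one_add hsum.summable fun _ ↦ neg_one_lt_zero.trans (hpos _)]
  exact Real.log_lt_log (by positivity) hprod
end

section
/- If 1 ≤ x < 2, then for every I ≥ 0 the logarithm recurrence satisfies 0 ≤ x − E_I < 2^{2−I}. -/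
/-- Restoring shift-and-add recurrence for computing `ln x`:
`(logRec x n).1 = Eₙ` and `(logRec x n).2 = Lₙ`, with `E₀ = 1`, `L₀ = 0`,
`dₙ = 1` iff `Eₙ (1 + 2⁻ⁿ) ≤ x`, `Eₙ₊₁ = Eₙ (1 + dₙ 2⁻ⁿ)`,
`Lₙ₊₁ = Lₙ + dₙ ln (1 + 2⁻ⁿ)`. -/
noncomputable def logRec (x : ℝ) : ℕ → ℝ × ℝ
  | 0 => (1, 0)
  | n + 1 =>
    let p := logRec x n
    if p.1 * (1 + (2 : ℝ) ^ (-(n : ℤ))) ≤ x then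
      (p.1 * (1 + (2 : ℝ) ^ (-(n : ℤ))), p.2 + Real.log (1 + (2 : ℝ) ^ (-(n : ℤ))))
    else p

lemma logRec_key (x : ℝ) (hx1 : 1 ≤ x) (hx2 : x < 2) :
    ∀ n, 1 ≤ (logRec x n).1 ∧ (logRec x n).1 ≤ x ∧
      x < (logRec x n).1 * (1 + (2:ℝ) ^ ((1:ℤ) - n)) := by
  intro n
  induction n with
  | zero =>
    refine ⟨le_refl _, hx1, ?_⟩
    simp [logRec]
    nlinarith
  | succ n ih =>
    obtain ⟨h1, h2, h3⟩ := ih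
    have hp : (0:ℝ) < (2:ℝ) ^ (-(n:ℤ)) := by positivity
    have hpow : (2:ℝ) ^ ((1:ℤ) - n) = 2 * (2:ℝ) ^ (-(n:ℤ)) := by
      rw [zpow_sub₀ (by norm_num : (2:ℝ) ≠ 0), zpow_one]
      rw [zpow_neg]
      field_simp
    have hexp : ((1:ℤ) - ((n:ℕ)+1 : ℕ)) = -(n:ℤ) := by push_cast; ring
    show 1 ≤ (logRec x (n+1)).1 ∧ (logRec x (n+1)).1 ≤ x ∧
      x < (logRec x (n+1)).1 * (1 + (2:ℝ) ^ ((1:ℤ) - ((n:ℕ)+1:ℕ)))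
    rw [hexp, logRec]
    split_ifs with h
    · show 1 ≤ (logRec x n).1 * (1 + (2:ℝ) ^ (-(n:ℤ))) ∧ (logRec x n).1 * (1 + (2:ℝ) ^ (-(n:ℤ))) ≤ x ∧ x < (logRec x n).1 * (1 + (2:ℝ) ^ (-(n:ℤ))) * (1 + (2:ℝ) ^ (-(n:ℤ)))
      refine ⟨?_, h, ?_⟩
      · nlinarith
      · rw [hpow] at h3
        nlinarith
    · push_neg at h
      exact ⟨h1, h2, h⟩

/-- If `1 ≤ x < 2`, then for every `I`, `0 ≤ x − E_I < 2^{2−I}`. -/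
theorem logRec_residual_bound (x : ℝ) (hx1 : 1 ≤ x) (hx2 : x < 2) (I : ℕ) :
    0 ≤ x - (logRec x I).1 ∧ x - (logRec x I).1 < (2 : ℝ) ^ ((2 : ℤ) - I) := by
  obtain ⟨h1, h2, h3⟩ := logRec_key x hx1 hx2 I
  have hp : (0:ℝ) < (2:ℝ) ^ ((1:ℤ) - I) := by positivity
  have hpow : (2:ℝ) ^ ((2:ℤ) - I) = 2 * (2:ℝ) ^ ((1:ℤ) - I) := by
    rw [show ((2:ℤ) - I) = 1 + ((1:ℤ) - I) by ring, zpow_add₀ (by norm_num : (2:ℝ) ≠ 0), zpow_one]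
  constructor
  · linarith
  · rw [hpow]
    nlinarith
end
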